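/- Let Γ be a finitely generated group and let f : Γ → ℂ satisfy f(1) = 2 and f(γ)·f(δ) = f(γδ) + f(γδ⁻¹) for all γ, δ ∈ Γ. Then f is the character of a representation: there exists a group homomorphism ρ : Γ → SL₂(ℂ) such that f(γ) = Tr(ρ(γ)) for all γ ∈ Γ. -/

import Mathlib

open MonoidAlgebra

namespace TraceChar

variable {Γ : Type*} [Group Γ] {f : Γ → ℂ}

/-! ### Lemmas about trace functions -/

section flem
variable (h1 : f 1 = 2) (hmul : ∀ γ δ : Γ, f γ * f δ = f (γ * δ) + f (γ * δ⁻¹))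
include h1 hmul

lemma f_inv (γ : Γ) : f γ⁻¹ = f γ := by
  have h := hmul 1 γ
  simp only [one_mul, h1] at h
  linear_combination -h

lemma f_comm (γ δ : Γ) : f (γ * δ) = f (δ * γ) := by
  have h1' := hmul γ δ
  have h2 := hmul δ γ
  have h3 : f (δ * γ⁻¹) = f (γ * δ⁻¹) := by
    have := f_inv h1 hmul (δ * γ⁻¹)
    simpa [mul_inv_rev] using this.symm
  linear_combination h2 - h1' + h3

lemma base_ch (γ δ : Γ) : f (γ * γ * δ) = f γ * f (γ * δ) - f δ := by
  have h := hmul γ (γ * δ)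
  have h2 : f (γ * (γ * δ)⁻¹) = f δ := by
    rw [mul_inv_rev]
    rw [f_comm h1 hmul γ (δ⁻¹ * γ⁻¹)]
    have e : δ⁻¹ * γ⁻¹ * γ = δ⁻¹ := by group
    rw [e, f_inv h1 hmul]
  rw [← mul_assoc] at h
  linear_combination -h - h2

lemma base_lin (a b c : Γ) :
    f (a * b * c) + f (b * a * c)
      = f a * f (b * c) + f b * f (a * c) + (f (a * b) - f a * f b) * f c := by
  have h₂ := hmul b (a * c)
  have h₃ := hmul (a * b) c
  have h₄ := hmul a (b * c⁻¹)
  have h₅ := hmul b c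
  have h₆ : f (b * (a * c)⁻¹) = f (a * (b * c⁻¹)⁻¹) := by
    have := f_inv h1 hmul (b * (a * c)⁻¹)
    rw [← this]
    congr 1
    group
  have e₂ : b * (a * c) = b * a * c := by group
  have e₃ : a * (b * c⁻¹) = a * b * c⁻¹ := by group
  rw [e₂] at h₂
  rw [e₃] at h₄
  linear_combination -h₂ - h₃ + h₄ + f a * h₅ - h₆

end flem

/-! ### The trace functional on the group algebra -/

noncomputable def T (f : Γ → ℂ) : MonoidAlgebra ℂ Γ →ₗ[ℂ] ℂ :=
  Finsupp.linearCombination ℂ f ∘ₗ (MonoidAlgebra.coeffLinearEquiv ℂ).toLinearMap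

lemma T_of (γ : Γ) : T f (of ℂ Γ γ) = f γ := by
  show Finsupp.linearCombination ℂ f (Finsupp.single γ 1) = f γ
  rw [Finsupp.linearCombination_single, one_smul]

lemma T_one (h1 : f 1 = 2) : T f 1 = 2 := by
  rw [show (1 : MonoidAlgebra ℂ Γ) = of ℂ Γ 1 from rfl, T_of, h1]

section Tlem
variable (h1 : f 1 = 2) (hmul : ∀ γ δ : Γ, f γ * f δ = f (γ * δ) + f (γ * δ⁻¹))
include h1 hmul

lemma T_comm (x y : MonoidAlgebra ℂ Γ) : T f (x * y) = T f (y * x) := by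
  induction x using MonoidAlgebra.induction_on with
  | of γ =>
    induction y using MonoidAlgebra.induction_on with
    | of δ =>
      rw [← map_mul, ← map_mul, T_of, T_of]
      exact f_comm h1 hmul γ δ
    | add a b ha hb => simp only [mul_add, add_mul, map_add, ha, hb]
    | smul r a ha => simp only [mul_smul_comm, smul_mul_assoc, map_smul, ha]
  | add a b ha hb => simp only [mul_add, add_mul, map_add, ha, hb]
  | smul r a ha => simp only [mul_smul_comm, smul_mul_assoc, map_smul, ha]

lemma ch_mem (γ : Γ) (z : MonoidAlgebra ℂ Γ) :
    T f ((of ℂ Γ γ * of ℂ Γ γ - f γ • of ℂ Γ γ + 1) * z) = 0 := by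
  induction z using MonoidAlgebra.induction_on with
  | of δ =>
    simp only [add_mul, sub_mul, smul_mul_assoc, one_mul, ← map_mul, map_add, map_sub, map_smul,
      T_of, smul_eq_mul]
    have := base_ch h1 hmul γ δ
    linear_combination this
  | add a b ha hb => simp only [mul_add, map_add, ha, hb, add_zero]
  | smul r a ha => simp only [mul_smul_comm, map_smul, ha, smul_zero]

lemma D_eq (x y z : MonoidAlgebra ℂ Γ) :
    T f ((x * y + y * x) * z)
      = T f x * T f (y * z) + T f y * T f (x * z) + (T f (x * y) - T f x * T f y) * T f z := by
  induction x using MonoidAlgebra.induction_on with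
  | of a =>
    induction y using MonoidAlgebra.induction_on with
    | of b =>
      induction z using MonoidAlgebra.induction_on with
      | of c =>
        simp only [add_mul, map_add, ← map_mul, T_of]
        have := base_lin h1 hmul a b c
        linear_combination this
      | add u v hu hv =>
        simp only [mul_add, map_add] at hu hv ⊢
        linear_combination hu + hv
      | smul r u hu =>
        simp only [mul_smul_comm, map_smul, smul_eq_mul] at hu ⊢
        linear_combination r * hu
    | add u v hu hv =>
      simp only [mul_add, add_mul, map_add] at hu hv ⊢
      linear_combination hu + hv
    | smul r u hu =>
      simp only [mul_smul_comm, smul_mul_assoc, add_mul, mul_add, map_add, map_smul,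
        smul_eq_mul] at hu ⊢
      linear_combination r * hu
  | add u v hu hv =>
    simp only [mul_add, add_mul, map_add] at hu hv ⊢
    linear_combination hu + hv
  | smul r u hu =>
    simp only [mul_smul_comm, smul_mul_assoc, add_mul, mul_add, map_add, map_smul,
      smul_eq_mul] at hu ⊢
    linear_combination r * hu

lemma lin_mem (x y z : MonoidAlgebra ℂ Γ) :
    T f ((x * y + y * x - T f x • y - T f y • x - (T f (x * y) - T f x * T f y) • 1) * z) = 0 := by
  have h := D_eq h1 hmul x y z
  simp only [sub_mul, add_mul, smul_mul_assoc, one_mul, map_sub, map_add, map_smul,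
    smul_eq_mul] at h ⊢
  linear_combination h

end Tlem

/-! ### The quotient by the radical of the trace form -/

variable (f) in
def tc (h1 : f 1 = 2) (hmul : ∀ γ δ : Γ, f γ * f δ = f (γ * δ) + f (γ * δ⁻¹)) :
    RingCon (MonoidAlgebra ℂ Γ) where
  r x y := ∀ z, T f ((x - y) * z) = 0
  iseqv := by
    constructor
    · intro x z; simp
    · intro x y h z
      have e : (y - x) * z = -((x - y) * z) := by noncomm_ring
      rw [e, map_neg, h z, neg_zero]
    · intro x y w h h' z
      have e : (x - w) * z = (x - y) * z + (y - w) * z := by noncomm_ring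
      rw [e, map_add, h z, h' z, add_zero]
  add' := by
    intro a b u v h h' z
    have e : (a + u - (b + v)) * z = (a - b) * z + (u - v) * z := by noncomm_ring
    rw [e, map_add, h z, h' z, add_zero]
  mul' := by
    intro a b u v h h' z
    have e : (a * u - b * v) * z = (a - b) * (u * z) + b * ((u - v) * z) := by noncomm_ring
    rw [e, map_add, h (u * z), zero_add, T_comm h1 hmul, mul_assoc]
    exact h' (z * b)

section quot
variable (h1 : f 1 = 2) (hmul : ∀ γ δ : Γ, f γ * f δ = f (γ * δ) + f (γ * δ⁻¹))

noncomputable instance : Module ℂ (tc f h1 hmul).Quotient :=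
  Function.Surjective.module ℂ
    ((tc f h1 hmul).mk' : MonoidAlgebra ℂ Γ →+* (tc f h1 hmul).Quotient).toAddMonoidHom
    Quotient.mk''_surjective (fun _ _ => rfl)

noncomputable def TqL : (tc f h1 hmul).Quotient →ₗ[ℂ] ℂ where
  toFun u := Quotient.liftOn' u (T f) (by
    intro a b hab
    have h := hab 1
    rw [mul_one, map_sub, sub_eq_zero] at h
    exact h)
  map_add' u v := Quotient.inductionOn₂' u v (fun x y => map_add (T f) x y)
  map_smul' s u := Quotient.inductionOn' u (fun x => map_smul (T f) s x)

lemma TqL_one : TqL h1 hmul 1 = 2 := T_one h1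

lemma TqL_comm (u v : (tc f h1 hmul).Quotient) :
    TqL h1 hmul (u * v) = TqL h1 hmul (v * u) :=
  Quotient.inductionOn₂' u v (fun x y => T_comm h1 hmul x y)

lemma TqL_nondeg (u : (tc f h1 hmul).Quotient)
    (h : ∀ v, TqL h1 hmul (u * v) = 0) : u = 0 := by
  induction u using Quotient.inductionOn' with
  | h x =>
    have : ((x : MonoidAlgebra ℂ Γ) : (tc f h1 hmul).Quotient)
        = ((0 : MonoidAlgebra ℂ Γ) : (tc f h1 hmul).Quotient) := by
      rw [RingCon.eq]
      intro z
      rw [sub_zero]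
      exact h (z : (tc f h1 hmul).Quotient)
    simp at this
    exact this

lemma TqL_main (u v : (tc f h1 hmul).Quotient) :
    u * v + v * u = TqL h1 hmul u • v + TqL h1 hmul v • u
      + (TqL h1 hmul (u * v) - TqL h1 hmul u * TqL h1 hmul v) • (1 : (tc f h1 hmul).Quotient) := by
  induction u using Quotient.inductionOn' with
  | h x =>
  induction v using Quotient.inductionOn' with
  | h y =>
    show ((x * y + y * x : MonoidAlgebra ℂ Γ) : (tc f h1 hmul).Quotient)
      = ((T f x • y + T f y • x + (T f (x * y) - T f x * T f y) • 1 : MonoidAlgebra ℂ Γ) :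
          (tc f h1 hmul).Quotient)
    rw [RingCon.eq]
    intro z
    have h := lin_mem h1 hmul x y z
    have e : (x * y + y * x - (T f x • y + T f y • x + (T f (x * y) - T f x * T f y) • 1)) * z
        = (x * y + y * x - T f x • y - T f y • x - (T f (x * y) - T f x * T f y) • 1) * z := by
      noncomm_ring
    rw [e]
    exact h

noncomputable def gq (γ : Γ) : (tc f h1 hmul).Quotient :=
  ((of ℂ Γ γ : MonoidAlgebra ℂ Γ) : (tc f h1 hmul).Quotient)

lemma gq_one : gq h1 hmul (1 : Γ) = 1 := by
  show ((of ℂ Γ 1 : MonoidAlgebra ℂ Γ) : (tc f h1 hmul).Quotient) = 1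
  rw [map_one]
  exact RingCon.coe_one _

lemma gq_mul (γ δ : Γ) : gq h1 hmul γ * gq h1 hmul δ = gq h1 hmul (γ * δ) := by
  show ((of ℂ Γ γ * of ℂ Γ δ : MonoidAlgebra ℂ Γ) : (tc f h1 hmul).Quotient) = _
  rw [← map_mul]
  rfl

lemma TqL_gq (γ : Γ) : TqL h1 hmul (gq h1 hmul γ) = f γ := T_of γ

lemma gq_ch (γ : Γ) :
    gq h1 hmul γ * gq h1 hmul γ = f γ • gq h1 hmul γ - 1 := by
  show ((of ℂ Γ γ * of ℂ Γ γ : MonoidAlgebra ℂ Γ) : (tc f h1 hmul).Quotient)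
    = ((f γ • of ℂ Γ γ - 1 : MonoidAlgebra ℂ Γ) : (tc f h1 hmul).Quotient)
  rw [RingCon.eq]
  intro z
  have h := ch_mem h1 hmul γ z
  have e : (of ℂ Γ γ * of ℂ Γ γ - (f γ • of ℂ Γ γ - 1)) * z
      = (of ℂ Γ γ * of ℂ Γ γ - f γ • of ℂ Γ γ + 1) * z := by noncomm_ring
  rw [e]
  exact h

end quot

/-! ### Abstract classification of the quotient algebra -/

section Abstract

variable {H : Type*} [Ring H] [Module ℂ H] [IsScalarTower ℂ H H] [SMulCommClass ℂ H H]
variable {tq : H →ₗ[ℂ] ℂ}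

section lems
variable (hmain : ∀ u v : H, u * v + v * u
    = tq u • v + tq v • u + (tq (u * v) - tq u * tq v) • (1 : H))

include hmain in
lemma anti {u v : H} (hu : tq u = 0) (hv : tq v = 0) :
    u * v + v * u = tq (u * v) • (1 : H) := by
  have h := hmain u v
  rw [hu, hv] at h
  simpa using h

include hmain in
lemma iso_sq {u : H} (hu : tq u = 0) : u * u = (tq (u * u) / 2) • (1 : H) := by
  have h := anti hmain hu hu
  have h2' : (2 : ℂ) • (u * u) = tq (u * u) • (1 : H) := by
    rw [two_smul]; exact h
  calc u * u = (2 : ℂ)⁻¹ • ((2 : ℂ) • (u * u)) := by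
        rw [smul_smul]; norm_num
    _ = (2 : ℂ)⁻¹ • (tq (u * u) • (1 : H)) := by rw [h2']
    _ = (tq (u * u) / 2) • (1 : H) := by rw [smul_smul]; ring_nf

include hmain in
lemma normalize {u : H} (hu : tq u = 0) (hq : tq (u * u) ≠ 0) :
    ∃ (e : H) (c : ℂ), e = c • u ∧ tq e = 0 ∧ e * e = 1 := by
  obtain ⟨c, hc⟩ := IsAlgClosed.exists_pow_nat_eq (k := ℂ) (2 / tq (u * u)) (n := 2) (by norm_num)
  refine ⟨c • u, c, rfl, by simp [hu], ?_⟩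
  have hm : (c • u) * (c • u) = (c * c) • (u * u) := by
    rw [smul_mul_assoc, mul_smul_comm, smul_smul]
  rw [hm, iso_sq hmain hu, smul_smul]
  have hcc : c * c = 2 / tq (u * u) := by rw [← hc]; ring
  rw [hcc]
  have hone : 2 / tq (u * u) * (tq (u * u) / 2) = 1 := by field_simp
  rw [hone, one_smul]

end lems

theorem exists_rep (h2 : tq 1 = 2)
    (hcomm : ∀ u v : H, tq (u * v) = tq (v * u))
    (hnd : ∀ u : H, (∀ v : H, tq (u * v) = 0) → u = 0)
    (hmain : ∀ u v : H, u * v + v * u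
      = tq u • v + tq v • u + (tq (u * v) - tq u * tq v) • (1 : H)) :
    ∃ φ : H → Matrix (Fin 2) (Fin 2) ℂ,
      (∀ u v, φ (u * v) = φ u * φ v) ∧ φ 1 = 1 ∧
      (∀ u v, φ (u + v) = φ u + φ v) ∧ (∀ (s : ℂ) (u : H), φ (s • u) = s • φ u) ∧
      (∀ u, (φ u).trace = tq u) := by
  by_cases hE : ∃ e : H, tq e = 0 ∧ tq (e * e) ≠ 0
  · obtain ⟨e₀, he₀, he₀q⟩ := hE
    obtain ⟨e₁, c₁, he₁def, he₁, r11⟩ := normalize hmain he₀ he₀q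
    have t11 : tq (e₁ * e₁) = 2 := by rw [r11, h2]
    by_cases hE2 : ∃ w : H, tq w = 0 ∧ tq (w * e₁) = 0 ∧ tq (w * w) ≠ 0
    · -- the irreducible case : H ≅ M₂(ℂ)
      obtain ⟨w₀, hw₀, hw₀e, hw₀q⟩ := hE2
      obtain ⟨e₂, c₂, he₂def, he₂, r22⟩ := normalize hmain hw₀ hw₀q
      have t12' : tq (e₂ * e₁) = 0 := by
        rw [he₂def, smul_mul_assoc, map_smul, hw₀e, smul_zero]
      have t12 : tq (e₁ * e₂) = 0 := by rw [hcomm]; exact t12'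
      obtain ⟨e₃, he₃def⟩ : ∃ e₃ : H, e₃ = e₁ * e₂ := ⟨e₁ * e₂, rfl⟩
      have r12 : e₁ * e₂ = e₃ := he₃def.symm
      have a12 : e₁ * e₂ + e₂ * e₁ = 0 := by
        rw [anti hmain he₁ he₂, t12, zero_smul]
      have r21 : e₂ * e₁ = -e₃ := by
        rw [he₃def]; exact eq_neg_of_add_eq_zero_right a12
      have he₃ : tq e₃ = 0 := by rw [he₃def]; exact t12
      have r13 : e₁ * e₃ = e₂ := by rw [he₃def, ← mul_assoc, r11, one_mul]
      have r31 : e₃ * e₁ = -e₂ := by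
        calc e₃ * e₁ = e₁ * (e₂ * e₁) := by rw [he₃def]; noncomm_ring
          _ = -(e₁ * e₃) := by rw [r21, mul_neg]
          _ = -e₂ := by rw [r13]
      have r32 : e₃ * e₂ = e₁ := by
        calc e₃ * e₂ = e₁ * (e₂ * e₂) := by rw [he₃def]; noncomm_ring
          _ = e₁ := by rw [r22, mul_one]
      have r23 : e₂ * e₃ = -e₁ := by
        calc e₂ * e₃ = (e₂ * e₁) * e₂ := by rw [he₃def]; noncomm_ring
          _ = -(e₃ * e₂) := by rw [r21, neg_mul]
          _ = -e₁ := by rw [r32]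
      have r33 : e₃ * e₃ = -1 := by
        calc e₃ * e₃ = (e₃ * e₁) * e₂ := by rw [he₃def]; noncomm_ring
          _ = -(e₂ * e₂) := by rw [r31, neg_mul]
          _ = -1 := by rw [r22]
      have t22 : tq (e₂ * e₂) = 2 := by rw [r22, h2]
      have t33 : tq (e₃ * e₃) = -2 := by rw [r33, map_neg, h2]
      have t13 : tq (e₁ * e₃) = 0 := by rw [r13, he₂]
      have t31 : tq (e₃ * e₁) = 0 := by rw [r31, map_neg, he₂, neg_zero]
      have t23 : tq (e₂ * e₃) = 0 := by rw [r23, map_neg, he₁, neg_zero]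
      have t32 : tq (e₃ * e₂) = 0 := by rw [r32, he₁]
      -- every element is a combination of 1, e₁, e₂, e₃
      have repr3 : ∀ u : H, u = (tq u / 2) • 1 + (tq (u * e₁) / 2) • e₁
          + (tq (u * e₂) / 2) • e₂ + (-(tq (u * e₃)) / 2) • e₃ := by
        intro u
        obtain ⟨w, hwdef⟩ : ∃ w : H, w = u - ((tq u / 2) • 1 + (tq (u * e₁) / 2) • e₁
          + (tq (u * e₂) / 2) • e₂ + (-(tq (u * e₃)) / 2) • e₃) := ⟨_, rfl⟩
        have hw : tq w = 0 := by
          rw [hwdef]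
          simp only [map_sub, map_add, map_smul, smul_eq_mul, h2, he₁, he₂, he₃]
          ring
        have hw1 : tq (w * e₁) = 0 := by
          rw [hwdef]
          simp only [sub_mul, add_mul, smul_mul_assoc, one_mul, map_sub, map_add, map_smul,
            smul_eq_mul, t11, t12', t31, he₁]
          ring
        have hw2 : tq (w * e₂) = 0 := by
          rw [hwdef]
          simp only [sub_mul, add_mul, smul_mul_assoc, one_mul, map_sub, map_add, map_smul,
            smul_eq_mul, t12, t22, t32, he₂]
          ring
        have hw3 : tq (w * e₃) = 0 := by
          rw [hwdef]
          simp only [sub_mul, add_mul, smul_mul_assoc, one_mul, map_sub, map_add, map_smul,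
            smul_eq_mul, t13, t23, t33, he₃]
          ring
        have A1 : w * e₁ = -(e₁ * w) := by
          have := anti hmain hw he₁
          rw [hw1, zero_smul] at this
          exact eq_neg_of_add_eq_zero_left this
        have A2 : w * e₂ = -(e₂ * w) := by
          have := anti hmain hw he₂
          rw [hw2, zero_smul] at this
          exact eq_neg_of_add_eq_zero_left this
        have A3 : w * e₃ = -(e₃ * w) := by
          have := anti hmain hw he₃
          rw [hw3, zero_smul] at this
          exact eq_neg_of_add_eq_zero_left this
        have hC : w * e₃ = e₃ * w := by
          calc w * e₃ = (w * e₁) * e₂ := by rw [he₃def]; noncomm_ring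
            _ = -(e₁ * (w * e₂)) := by rw [A1, neg_mul, mul_assoc]
            _ = e₁ * (e₂ * w) := by rw [A2, mul_neg, neg_neg]
            _ = e₃ * w := by rw [he₃def]; noncomm_ring
        have hz : e₃ * w = 0 := by
          have h0 : w * e₃ + e₃ * w = 0 := by
            rw [anti hmain hw he₃, hw3, zero_smul]
          rw [hC] at h0
          have h2s : (2 : ℂ) • (e₃ * w) = 0 := by rw [two_smul]; exact h0
          have := smul_eq_zero.mp h2s
          rcases this with h | h
          · norm_num at h
          · exact h
        have hwz : w = 0 := by
          have : w = -(e₃ * (e₃ * w)) := by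
            rw [← mul_assoc, r33, neg_mul, one_mul, neg_neg]
          rw [hz, mul_zero, neg_zero] at this
          exact this
        rw [hwdef] at hwz
        exact (sub_eq_zero.mp hwz)
      -- matrices
      obtain ⟨σ₁, hσ₁⟩ : ∃ M : Matrix (Fin 2) (Fin 2) ℂ, M = !![0,1;1,0] := ⟨_, rfl⟩
      obtain ⟨σ₂, hσ₂⟩ : ∃ M : Matrix (Fin 2) (Fin 2) ℂ, M = !![0,-Complex.I;Complex.I,0] :=
        ⟨_, rfl⟩
      obtain ⟨σ₃, hσ₃⟩ : ∃ M : Matrix (Fin 2) (Fin 2) ℂ, M = !![Complex.I,0;0,-Complex.I] :=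
        ⟨_, rfl⟩
      have m11 : σ₁ * σ₁ = 1 := by
        subst hσ₁; ext i j; fin_cases i <;> fin_cases j <;>
          simp [Matrix.mul_apply, Fin.sum_univ_two, Matrix.one_apply]
      have m22 : σ₂ * σ₂ = 1 := by
        subst hσ₂; ext i j; fin_cases i <;> fin_cases j <;>
          simp [Matrix.mul_apply, Fin.sum_univ_two, Matrix.one_apply, Complex.I_mul_I]
      have m33 : σ₃ * σ₃ = -1 := by
        subst hσ₃; ext i j; fin_cases i <;> fin_cases j <;>
          simp [Matrix.mul_apply, Fin.sum_univ_two, Matrix.one_apply, Complex.I_mul_I]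
      have m12 : σ₁ * σ₂ = σ₃ := by
        subst hσ₁; subst hσ₂; subst hσ₃; ext i j; fin_cases i <;> fin_cases j <;>
          simp [Matrix.mul_apply, Fin.sum_univ_two]
      have m21 : σ₂ * σ₁ = -σ₃ := by
        subst hσ₁; subst hσ₂; subst hσ₃; ext i j; fin_cases i <;> fin_cases j <;>
          simp [Matrix.mul_apply, Fin.sum_univ_two]
      have m13 : σ₁ * σ₃ = σ₂ := by
        subst hσ₁; subst hσ₂; subst hσ₃; ext i j; fin_cases i <;> fin_cases j <;>
          simp [Matrix.mul_apply, Fin.sum_univ_two]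
      have m31 : σ₃ * σ₁ = -σ₂ := by
        subst hσ₁; subst hσ₂; subst hσ₃; ext i j; fin_cases i <;> fin_cases j <;>
          simp [Matrix.mul_apply, Fin.sum_univ_two]
      have m23 : σ₂ * σ₃ = -σ₁ := by
        subst hσ₁; subst hσ₂; subst hσ₃; ext i j; fin_cases i <;> fin_cases j <;>
          simp [Matrix.mul_apply, Fin.sum_univ_two, Complex.I_mul_I]
      have m32 : σ₃ * σ₂ = σ₁ := by
        subst hσ₁; subst hσ₂; subst hσ₃; ext i j; fin_cases i <;> fin_cases j <;>
          simp [Matrix.mul_apply, Fin.sum_univ_two, Complex.I_mul_I]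
      have trσ₁ : σ₁.trace = 0 := by subst hσ₁; simp [Matrix.trace_fin_two]
      have trσ₂ : σ₂.trace = 0 := by subst hσ₂; simp [Matrix.trace_fin_two]
      have trσ₃ : σ₃.trace = 0 := by subst hσ₃; simp [Matrix.trace_fin_two]
      -- coordinates of combinations
      have ctq : ∀ s t r q : ℂ, tq (s • 1 + t • e₁ + r • e₂ + q • e₃) = 2 * s := by
        intro s t r q
        simp only [map_add, map_smul, smul_eq_mul, h2, he₁, he₂, he₃]
        ring
      have ctq1 : ∀ s t r q : ℂ, tq ((s • 1 + t • e₁ + r • e₂ + q • e₃) * e₁) = 2 * t := by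
        intro s t r q
        simp only [add_mul, smul_mul_assoc, one_mul, map_add, map_smul, smul_eq_mul,
          t11, t12', t31, he₁]
        ring
      have ctq2 : ∀ s t r q : ℂ, tq ((s • 1 + t • e₁ + r • e₂ + q • e₃) * e₂) = 2 * r := by
        intro s t r q
        simp only [add_mul, smul_mul_assoc, one_mul, map_add, map_smul, smul_eq_mul,
          t12, t22, t32, he₂]
        ring
      have ctq3 : ∀ s t r q : ℂ, tq ((s • 1 + t • e₁ + r • e₂ + q • e₃) * e₃) = -(2 * q) := by
        intro s t r q
        simp only [add_mul, smul_mul_assoc, one_mul, map_add, map_smul, smul_eq_mul,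
          t13, t23, t33, he₃]
        ring
      -- multiplication rule in H
      have mulC : ∀ s t r q s' t' r' q' : ℂ,
          (s • 1 + t • e₁ + r • e₂ + q • e₃) * (s' • 1 + t' • e₁ + r' • e₂ + q' • e₃)
          = (s*s' + t*t' + r*r' - q*q') • 1 + (s*t' + t*s' - r*q' + q*r') • e₁
            + (s*r' + r*s' + t*q' - q*t') • e₂ + (s*q' + q*s' + t*r' - r*t') • e₃ := by
        intro s t r q s' t' r' q'
        simp only [add_mul, mul_add, smul_mul_assoc, mul_smul_comm, smul_smul, one_mul, mul_one,
          r11, r12, r21, r13, r31, r22, r23, r32, r33, smul_neg]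
        module
      have mulM : ∀ s t r q s' t' r' q' : ℂ,
          ((s • 1 + t • σ₁ + r • σ₂ + q • σ₃) : Matrix (Fin 2) (Fin 2) ℂ)
            * (s' • 1 + t' • σ₁ + r' • σ₂ + q' • σ₃)
          = (s*s' + t*t' + r*r' - q*q') • 1 + (s*t' + t*s' - r*q' + q*r') • σ₁
            + (s*r' + r*s' + t*q' - q*t') • σ₂ + (s*q' + q*s' + t*r' - r*t') • σ₃ := by
        intro s t r q s' t' r' q'
        simp only [add_mul, mul_add, smul_mul_assoc, mul_smul_comm, smul_smul, one_mul, mul_one,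
          m11, m12, m21, m13, m31, m22, m23, m32, m33, smul_neg]
        module
      refine ⟨fun u => (tq u / 2) • 1 + (tq (u * e₁) / 2) • σ₁
          + (tq (u * e₂) / 2) • σ₂ + (-(tq (u * e₃)) / 2) • σ₃, ?_, ?_, ?_, ?_, ?_⟩
      · intro u v
        simp only []
        conv_lhs => rw [repr3 u, repr3 v]
        conv_rhs => rw [repr3 u, repr3 v]
        rw [mulC]
        rw [ctq, ctq1, ctq2, ctq3, ctq, ctq1, ctq2, ctq3, ctq, ctq1, ctq2, ctq3]
        rw [mulM]
        ring_nf
      · simp only []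
        simp only [one_mul, h2, he₁, he₂, he₃]
        norm_num
      · intro u v
        simp only [add_mul, map_add]
        module
      · intro s u
        simp only [smul_mul_assoc, map_smul, smul_eq_mul]
        module
      · intro u
        simp only [Matrix.trace_add, Matrix.trace_smul, trσ₁, trσ₂, trσ₃, Matrix.trace_one,
          smul_eq_mul]
        simp only [Fintype.card_fin, Nat.cast_ofNat]
        ring
    · -- the 2-dimensional case : H ≅ ℂ × ℂ
      push_neg at hE2
      have pol2 : ∀ u v : H, tq u = 0 → tq (u * e₁) = 0 → tq v = 0 → tq (v * e₁) = 0 →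
          tq (u * v) = 0 := by
        intro u v hu hue hv hve
        have hsum := hE2 (u + v) (by rw [map_add, hu, hv, add_zero])
          (by rw [add_mul, map_add, hue, hve, add_zero])
        have hu2 := hE2 u hu hue
        have hv2 := hE2 v hv hve
        have hexp : (u + v) * (u + v) = u * u + (u * v + v * u) + v * v := by noncomm_ring
        rw [hexp, map_add, map_add, map_add, hu2, hv2, hcomm v u] at hsum
        have : (2 : ℂ) * tq (u * v) = 0 := by linear_combination hsum
        have := mul_eq_zero.mp this
        rcases this with h | h
        · norm_num at h
        · exact h
      have repr2 : ∀ u : H, u = (tq u / 2) • 1 + (tq (u * e₁) / 2) • e₁ := by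
        intro u
        obtain ⟨w, hwdef⟩ : ∃ w : H, w = u - ((tq u / 2) • 1 + (tq (u * e₁) / 2) • e₁) :=
          ⟨_, rfl⟩
        have hw : tq w = 0 := by
          rw [hwdef]
          simp only [map_sub, map_add, map_smul, smul_eq_mul, h2, he₁]
          ring
        have hw1 : tq (w * e₁) = 0 := by
          rw [hwdef]
          simp only [sub_mul, add_mul, smul_mul_assoc, one_mul, map_sub, map_add, map_smul,
            smul_eq_mul, t11, he₁]
          ring
        have hwz : w = 0 := by
          apply hnd
          intro v
          obtain ⟨wv, hwvdef⟩ : ∃ wv : H, wv = v - ((tq v / 2) • 1 + (tq (v * e₁) / 2) • e₁) :=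
            ⟨_, rfl⟩
          have hwv : tq wv = 0 := by
            rw [hwvdef]
            simp only [map_sub, map_add, map_smul, smul_eq_mul, h2, he₁]
            ring
          have hwv1 : tq (wv * e₁) = 0 := by
            rw [hwvdef]
            simp only [sub_mul, add_mul, smul_mul_assoc, one_mul, map_sub, map_add, map_smul,
              smul_eq_mul, t11, he₁]
            ring
          have hv : v = (tq v / 2) • 1 + (tq (v * e₁) / 2) • e₁ + wv := by
            rw [hwvdef]; abel
          rw [hv, mul_add, mul_add, mul_smul_comm, mul_smul_comm, mul_one, map_add, map_add,
            map_smul, map_smul, smul_eq_mul, smul_eq_mul, hw, hw1,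
            pol2 w wv hw hw1 hwv hwv1]
          ring
        rw [hwdef] at hwz
        exact (sub_eq_zero.mp hwz)
      obtain ⟨σ, hσ⟩ : ∃ M : Matrix (Fin 2) (Fin 2) ℂ, M = !![1,0;0,-1] := ⟨_, rfl⟩
      have mσ : σ * σ = 1 := by
        subst hσ; ext i j; fin_cases i <;> fin_cases j <;>
          simp [Matrix.mul_apply, Fin.sum_univ_two, Matrix.one_apply]
      have trσ : σ.trace = 0 := by subst hσ; simp [Matrix.trace_fin_two]
      have ctq : ∀ s t : ℂ, tq (s • 1 + t • e₁) = 2 * s := by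
        intro s t
        simp only [map_add, map_smul, smul_eq_mul, h2, he₁]
        ring
      have ctq1 : ∀ s t : ℂ, tq ((s • 1 + t • e₁) * e₁) = 2 * t := by
        intro s t
        simp only [add_mul, smul_mul_assoc, one_mul, map_add, map_smul, smul_eq_mul, t11, he₁]
        ring
      have mulC : ∀ s t s' t' : ℂ, ((s • 1 + t • e₁ : H)) * (s' • 1 + t' • e₁)
          = (s*s' + t*t') • 1 + (s*t' + t*s') • e₁ := by
        intro s t s' t'
        simp only [add_mul, mul_add, smul_mul_assoc, mul_smul_comm, smul_smul, one_mul, mul_one,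
          r11]
        module
      have mulM : ∀ s t s' t' : ℂ, ((s • 1 + t • σ) : Matrix (Fin 2) (Fin 2) ℂ)
          * (s' • 1 + t' • σ) = (s*s' + t*t') • 1 + (s*t' + t*s') • σ := by
        intro s t s' t'
        simp only [add_mul, mul_add, smul_mul_assoc, mul_smul_comm, smul_smul, one_mul, mul_one,
          mσ]
        module
      refine ⟨fun u => (tq u / 2) • 1 + (tq (u * e₁) / 2) • σ, ?_, ?_, ?_, ?_, ?_⟩
      · intro u v
        simp only []
        conv_lhs => rw [repr2 u, repr2 v]
        conv_rhs => rw [repr2 u, repr2 v]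
        rw [mulC, ctq, ctq1, ctq, ctq1, ctq, ctq1, mulM]
        ring_nf
      · simp only []
        simp only [one_mul, h2, he₁]
        norm_num
      · intro u v
        simp only [add_mul, map_add]
        module
      · intro s u
        simp only [smul_mul_assoc, map_smul, smul_eq_mul]
        module
      · intro u
        simp only [Matrix.trace_add, Matrix.trace_smul, trσ, Matrix.trace_one, smul_eq_mul]
        simp only [Fintype.card_fin, Nat.cast_ofNat]
        ring
  · -- the 1-dimensional case : H ≅ ℂ
    push_neg at hE
    have pol1 : ∀ u v : H, tq u = 0 → tq v = 0 → tq (u * v) = 0 := by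
      intro u v hu hv
      have hsum := hE (u + v) (by rw [map_add, hu, hv, add_zero])
      have hu2 := hE u hu
      have hv2 := hE v hv
      have hexp : (u + v) * (u + v) = u * u + (u * v + v * u) + v * v := by noncomm_ring
      rw [hexp, map_add, map_add, map_add, hu2, hv2, hcomm v u] at hsum
      have h2t : (2 : ℂ) * tq (u * v) = 0 := by linear_combination hsum
      rcases mul_eq_zero.mp h2t with h | h
      · norm_num at h
      · exact h
    have repr1 : ∀ u : H, u = (tq u / 2) • 1 := by
      intro u
      obtain ⟨w, hwdef⟩ : ∃ w : H, w = u - (tq u / 2) • 1 := ⟨_, rfl⟩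
      have hw : tq w = 0 := by
        rw [hwdef]
        simp only [map_sub, map_smul, smul_eq_mul, h2]
        ring
      have hwz : w = 0 := by
        apply hnd
        intro v
        obtain ⟨wv, hwvdef⟩ : ∃ wv : H, wv = v - (tq v / 2) • 1 := ⟨_, rfl⟩
        have hwv : tq wv = 0 := by
          rw [hwvdef]
          simp only [map_sub, map_smul, smul_eq_mul, h2]
          ring
        have hv : v = (tq v / 2) • 1 + wv := by rw [hwvdef]; abel
        rw [hv, mul_add, mul_smul_comm, mul_one, map_add, map_smul, smul_eq_mul, hw,
          pol1 w wv hw hwv]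
        ring
      rw [hwdef] at hwz
      exact (sub_eq_zero.mp hwz)
    refine ⟨fun u => (tq u / 2) • 1, ?_, ?_, ?_, ?_, ?_⟩
    · intro u v
      simp only []
      conv_lhs => rw [repr1 u, repr1 v]
      conv_rhs => rw [repr1 u, repr1 v]
      have mulC : ∀ s s' : ℂ, ((s • 1 : H)) * (s' • 1) = (s * s') • 1 := by
        intro s s'
        rw [smul_mul_assoc, mul_smul_comm, smul_smul, mul_one]
      have ctq : ∀ s : ℂ, tq ((s • 1 : H)) = 2 * s := by
        intro s
        rw [map_smul, smul_eq_mul, h2]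
        ring
      rw [mulC, ctq, ctq, ctq]
      rw [smul_mul_assoc, mul_smul_comm, smul_smul, mul_one]
      ring_nf
    · simp only []
      rw [h2]
      norm_num
    · intro u v
      simp only [map_add]
      module
    · intro s u
      simp only [map_smul, smul_eq_mul]
      module
    · intro u
      simp only [Matrix.trace_smul, Matrix.trace_one, smul_eq_mul]
      simp only [Fintype.card_fin, Nat.cast_ofNat]
      ring

end Abstract

/-! ### determinant from Cayley–Hamilton -/

lemma det_of_ch (M : Matrix (Fin 2) (Fin 2) ℂ) (t : ℂ) (hM : M * M = t • M - 1)
    (ht : M.trace = t) : M.det = 1 := by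
  have h00 : (M * M) 0 0 = t * M 0 0 - 1 := by
    rw [hM]
    simp [Matrix.sub_apply, Matrix.smul_apply, Matrix.one_apply, smul_eq_mul]
  have hmm : (M * M) 0 0 = M 0 0 * M 0 0 + M 0 1 * M 1 0 := by
    simp [Matrix.mul_apply, Fin.sum_univ_two]
  have hq : M 0 0 * M 0 0 + M 0 1 * M 1 0 = t * M 0 0 - 1 := by rw [← hmm, h00]
  have htr : M 0 0 + M 1 1 = t := by rw [← ht]; simp [Matrix.trace_fin_two]
  rw [Matrix.det_fin_two]
  linear_combination (-1 : ℂ) * hq + M 0 0 * htr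

end TraceChar

/-! ### Main theorem -/

theorem trace_relation_gives_character {Γ : Type*} [Group Γ] [Group.FG Γ] (f : Γ → ℂ)
    (h1 : f 1 = 2)
    (hmul : ∀ γ δ : Γ, f γ * f δ = f (γ * δ) + f (γ * δ⁻¹)) :
    ∃ ρ : Γ →* Matrix.SpecialLinearGroup (Fin 2) ℂ,
      ∀ γ : Γ, f γ = Matrix.trace (ρ γ : Matrix (Fin 2) (Fin 2) ℂ) := by
  classical
  obtain ⟨φ, hφmul, hφone, hφadd, hφsmul, hφtr⟩ :=
    TraceChar.exists_rep (tq := TraceChar.TqL h1 hmul) (TraceChar.TqL_one h1 hmul)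
      (TraceChar.TqL_comm h1 hmul) (TraceChar.TqL_nondeg h1 hmul) (TraceChar.TqL_main h1 hmul)
  have hφsub : ∀ u v, φ (u - v) = φ u - φ v := by
    intro u v
    have e : u - v = u + (-1 : ℂ) • v := by module
    rw [e, hφadd, hφsmul]
    module
  have hch : ∀ γ : Γ, φ (TraceChar.gq h1 hmul γ) * φ (TraceChar.gq h1 hmul γ)
      = f γ • φ (TraceChar.gq h1 hmul γ) - 1 := by
    intro γ
    rw [← hφmul, TraceChar.gq_ch h1 hmul γ, hφsub, hφsmul, hφone]
  have htrg : ∀ γ : Γ, (φ (TraceChar.gq h1 hmul γ)).trace = f γ := by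
    intro γ
    rw [hφtr, TraceChar.TqL_gq]
  have hdet : ∀ γ : Γ, (φ (TraceChar.gq h1 hmul γ)).det = 1 := by
    intro γ
    exact TraceChar.det_of_ch _ (f γ) (hch γ) (htrg γ)
  refine ⟨{ toFun := fun γ => ⟨φ (TraceChar.gq h1 hmul γ), hdet γ⟩,
            map_one' := ?_, map_mul' := ?_ }, ?_⟩
  · apply Subtype.ext
    show φ (TraceChar.gq h1 hmul 1) = _
    rw [TraceChar.gq_one, hφone]
    rfl
  · intro γ δ
    apply Subtype.ext
    show φ (TraceChar.gq h1 hmul (γ * δ)) = _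
    rw [← TraceChar.gq_mul, hφmul]
    rfl
  · intro γ
    exact (htrg γ).symm
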